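/- Assume in addition c ≠ 1. For all x, y ∈ ℂ with |x| < 1: Φ₁(a, b; c; q; x, y) − Φ₁(a, b; c; q; qx, y) = ((1−a)(1−b)/(1−c)) · x · Φ₁(aq, bq; cq; q; x, y). -/

import Mathlib

open scoped BigOperators

noncomputable section

/-- The q-shifted factorial `(a;q)_n = ∏_{r=0}^{n-1} (1 - a q^r)`. -/
def qPoch (q a : ℂ) (n : ℕ) : ℂ := ∏ r ∈ Finset.range n, (1 - a * q ^ r)

/-- The basic Humbert function `Φ₁(a,b;c;q;x,y)` as a double series over `ℕ × ℕ`. -/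
def Phi1 (q a b c x y : ℂ) : ℂ :=
  ∑' p : ℕ × ℕ,
    qPoch q a (p.1 + p.2) * qPoch q b p.1 * x ^ p.1 * y ^ p.2 /
      (qPoch q c (p.1 + p.2) * qPoch q q p.1 * qPoch q q p.2)

/-- The basic Humbert function `Φ₂(a,b;c;q;x,y)` as a double series over `ℕ × ℕ`. -/
def Phi2 (q a b c x y : ℂ) : ℂ :=
  ∑' p : ℕ × ℕ,
    qPoch q a p.1 * qPoch q b p.2 * x ^ p.1 * y ^ p.2 /
      (qPoch q c (p.1 + p.2) * qPoch q q p.1 * qPoch q q p.2)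

/-- The basic Humbert function `Φ₃(a;b;q;x,y)` as a double series over `ℕ × ℕ`. -/
def Phi3 (q a b x y : ℂ) : ℂ :=
  ∑' p : ℕ × ℕ,
    qPoch q a p.1 * x ^ p.1 * y ^ p.2 /
      (qPoch q b (p.1 + p.2) * qPoch q q p.1 * qPoch q q p.2)

/-- The one-variable q-difference operator. -/
def qDiff (q : ℂ) (f : ℂ → ℂ) : ℂ → ℂ := fun x => (f x - f (q * x)) / ((1 - q) * x)

/-- The q-difference operator in the first variable of a two-variable function. -/
def qDx (q : ℂ) (f : ℂ → ℂ → ℂ) : ℂ → ℂ → ℂ :=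
  fun x y => (f x y - f (q * x) y) / ((1 - q) * x)

/-- The q-difference operator in the second variable of a two-variable function. -/
def qDy (q : ℂ) (f : ℂ → ℂ → ℂ) : ℂ → ℂ → ℂ :=
  fun x y => (f x y - f x (q * y)) / ((1 - q) * y)

/-- The infinite q-shifted factorial `(a;q)_∞ = ∏_{r=0}^∞ (1 - a q^r)`. -/
def qPochInf (q a : ℂ) : ℂ := ∏' r : ℕ, (1 - a * q ^ r)

/-!
Termwise, `x ^ n - (q x) ^ n = (1 - q ^ n) x ^ n` kills the column `n = 0`, and after the shift
`n ↦ n + 1` the contiguity `(a;q)_{n+1} = (1 - a) (aq;q)_n` turns each remaining term into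
`(1-a)(1-b)/(1-c) · x` times the corresponding term of `Φ₁(aq, bq; cq)`. This needs the series
for `Φ₁(a, b; c; x, y)` to converge. The `q`-shifted factorials converge to nonzero infinite
products, so the coefficients are bounded and the series converges for `‖y‖ < 1`. For `‖y‖ ≥ 1`
the series either terminates (`a = q^{-m}`) or its column `n = 0` does not tend to zero; in the
latter case all three series diverge and both sides are `0` under the `tsum` convention.
-/

open Filter Topology

lemma exists_forall_norm_le_of_tendsto {E : Type*} [SeminormedAddCommGroup E] {u : ℕ → E}
    {L : E} (h : Tendsto u atTop (𝓝 L)) : ∃ C, ∀ n, ‖u n‖ ≤ C := by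
  obtain ⟨C, hC⟩ := isBounded_iff_forall_norm_le.1 (Metric.isBounded_range_of_tendsto u h)
  exact ⟨C, fun n => hC _ ⟨n, rfl⟩⟩

lemma not_tendsto_mul_pow_zero {𝕜 : Type*} [NormedDivisionRing 𝕜] {u : ℕ → 𝕜} {L y : 𝕜}
    (hu : Tendsto u atTop (𝓝 L)) (hL : L ≠ 0) (hy : 1 ≤ ‖y‖) :
    ¬ Tendsto (fun k => u k * y ^ k) atTop (𝓝 0) := by
  intro h
  have hle : ∀ k, ‖u k‖ ≤ ‖u k * y ^ k‖ := fun k => by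
    rw [norm_mul, norm_pow]
    exact le_mul_of_one_le_right (norm_nonneg _) (one_le_pow₀ hy)
  have hu0 : Tendsto (fun k => ‖u k‖) atTop (𝓝 0) :=
    squeeze_zero (fun _ => norm_nonneg _) hle (by simpa using h.norm)
  exact hL (norm_eq_zero.1 (tendsto_nhds_unique hu.norm hu0))

lemma summable_mul_pow_mul_pow {𝕜 : Type*} [NormedField 𝕜] [CompleteSpace 𝕜]
    {f : ℕ × ℕ → 𝕜} {C : ℝ} (hf : ∀ p, ‖f p‖ ≤ C) {x y : 𝕜} (hx : ‖x‖ < 1) (hy : ‖y‖ < 1) :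
    Summable fun p : ℕ × ℕ => f p * x ^ p.1 * y ^ p.2 := by
  have hgeom := (summable_geometric_of_lt_one (norm_nonneg x) hx).mul_of_nonneg
    (summable_geometric_of_lt_one (norm_nonneg y) hy) (fun _ => by positivity)
    fun _ => by positivity
  refine Summable.of_norm_bounded (hgeom.mul_left C) fun p => ?_
  rw [norm_mul, norm_mul, norm_pow, norm_pow, mul_assoc]
  gcongr
  exact hf p

section qPoch

variable {q : ℂ}

lemma qPoch_zero (a : ℂ) : qPoch q a 0 = 1 :=
  Finset.prod_range_zero _

lemma qPoch_succ (a : ℂ) (n : ℕ) : qPoch q a (n + 1) = qPoch q a n * (1 - a * q ^ n) :=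
  Finset.prod_range_succ _ n

lemma qPoch_succ' (a : ℂ) (n : ℕ) : qPoch q a (n + 1) = (1 - a) * qPoch q (a * q) n := by
  rw [qPoch, Finset.prod_range_succ', pow_zero, mul_one, mul_comm, qPoch]
  congr 1
  exact Finset.prod_congr rfl fun r _ => by ring

lemma qPoch_ne_zero {a : ℂ} (ha : ∀ r : ℕ, 1 - a * q ^ r ≠ 0) (n : ℕ) : qPoch q a n ≠ 0 :=
  Finset.prod_ne_zero_iff.2 fun r _ => ha r

lemma qPoch_eq_zero_of_lt {a : ℂ} {m n : ℕ} (ha : 1 - a * q ^ m = 0) (hmn : m < n) :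
    qPoch q a n = 0 :=
  Finset.prod_eq_zero (Finset.mem_range.2 hmn) ha

lemma one_sub_mul_pow_ne_zero_of_ne_zpow {c : ℂ} (hc : ∀ m : ℕ, c ≠ q ^ (-(m : ℤ))) (r : ℕ) :
    1 - c * q ^ r ≠ 0 := by
  intro h
  apply hc r
  rw [zpow_neg, zpow_natCast]
  exact eq_inv_of_mul_eq_one_left (by linear_combination -h)

lemma one_sub_self_mul_pow_ne_zero (hq : ‖q‖ < 1) (r : ℕ) : 1 - q * q ^ r ≠ 0 := by
  rw [← pow_succ', sub_ne_zero]
  intro h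
  have : ‖q ^ (r + 1)‖ < 1 := by
    rw [norm_pow]
    exact pow_lt_one₀ (norm_nonneg q) hq r.succ_ne_zero
  rw [← h, norm_one] at this
  exact this.false

lemma one_sub_mul_mul_pow_ne_zero {a : ℂ} (ha : ∀ r : ℕ, 1 - a * q ^ r ≠ 0) (r : ℕ) :
    1 - a * q * q ^ r ≠ 0 := by
  simpa [mul_assoc, ← pow_succ'] using ha (r + 1)

lemma summable_norm_mul_pow (hq : ‖q‖ < 1) (a : ℂ) : Summable fun r : ℕ => ‖-(a * q ^ r)‖ := by
  simpa [norm_mul, norm_pow] using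
    (summable_geometric_of_lt_one (norm_nonneg q) hq).mul_left ‖a‖

lemma tendsto_qPoch (hq : ‖q‖ < 1) (a : ℂ) :
    Tendsto (qPoch q a) atTop (𝓝 (qPochInf q a)) := by
  unfold qPoch qPochInf
  simpa [sub_eq_add_neg] using
    (multipliable_one_add_of_summable (summable_norm_mul_pow hq a)).hasProd.tendsto_prod_nat

lemma qPochInf_ne_zero (hq : ‖q‖ < 1) {a : ℂ} (ha : ∀ r : ℕ, 1 - a * q ^ r ≠ 0) :
    qPochInf q a ≠ 0 := by
  simpa [qPochInf, sub_eq_add_neg] using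
    tprod_one_add_ne_zero_of_summable (by simpa [sub_eq_add_neg] using ha)
      (summable_norm_mul_pow hq a)

lemma exists_forall_norm_qPoch_inv_le (hq : ‖q‖ < 1) {a : ℂ}
    (ha : ∀ r : ℕ, 1 - a * q ^ r ≠ 0) : ∃ C, ∀ n, ‖(qPoch q a n)⁻¹‖ ≤ C :=
  exists_forall_norm_le_of_tendsto ((tendsto_qPoch hq a).inv₀ (qPochInf_ne_zero hq ha))

end qPoch

def phi1Coeff (q a b c : ℂ) (p : ℕ × ℕ) : ℂ :=
  qPoch q a (p.1 + p.2) * qPoch q b p.1 /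
    (qPoch q c (p.1 + p.2) * qPoch q q p.1 * qPoch q q p.2)

section phi1Coeff

variable {q a b c : ℂ}

lemma Phi1_eq_tsum (x y : ℂ) :
    Phi1 q a b c x y = ∑' p : ℕ × ℕ, phi1Coeff q a b c p * x ^ p.1 * y ^ p.2 := by
  unfold Phi1 phi1Coeff
  congr 1
  funext p
  ring

lemma phi1Coeff_zero_left (k : ℕ) :
    phi1Coeff q a b c (0, k) = qPoch q a k / (qPoch q c k * qPoch q q k) := by
  simp [phi1Coeff, qPoch_zero]

lemma phi1Coeff_succ_left (hq : ‖q‖ < 1) (hc : ∀ r : ℕ, 1 - c * q ^ r ≠ 0) (n k : ℕ) :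
    (1 - q ^ (n + 1)) * phi1Coeff q a b c (n + 1, k) =
      (1 - a) * (1 - b) / (1 - c) * phi1Coeff q (a * q) (b * q) (c * q) (n, k) := by
  have hc₀ : 1 - c ≠ 0 := by simpa using hc 0
  have hcq := qPoch_ne_zero (one_sub_mul_mul_pow_ne_zero hc) (n + k)
  have hqn := qPoch_ne_zero (one_sub_self_mul_pow_ne_zero hq) n
  have hqk := qPoch_ne_zero (one_sub_self_mul_pow_ne_zero hq) k
  have hqn' := one_sub_self_mul_pow_ne_zero hq n
  simp only [phi1Coeff]
  rw [add_right_comm, qPoch_succ' a, qPoch_succ' b, qPoch_succ' c, qPoch_succ q n, pow_succ']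
  field_simp

lemma exists_forall_norm_phi1Coeff_le (hq : ‖q‖ < 1) (hc : ∀ r : ℕ, 1 - c * q ^ r ≠ 0) :
    ∃ C, ∀ p, ‖phi1Coeff q a b c p‖ ≤ C := by
  obtain ⟨Ca, hCa⟩ := exists_forall_norm_le_of_tendsto (tendsto_qPoch hq a)
  obtain ⟨Cb, hCb⟩ := exists_forall_norm_le_of_tendsto (tendsto_qPoch hq b)
  obtain ⟨Cc, hCc⟩ := exists_forall_norm_qPoch_inv_le hq hc
  obtain ⟨Cq, hCq⟩ := exists_forall_norm_qPoch_inv_le hq (one_sub_self_mul_pow_ne_zero hq)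
  have hCa₀ : 0 ≤ Ca := (norm_nonneg _).trans (hCa 0)
  have hCb₀ : 0 ≤ Cb := (norm_nonneg _).trans (hCb 0)
  have hCc₀ : 0 ≤ Cc := (norm_nonneg _).trans (hCc 0)
  have hCq₀ : 0 ≤ Cq := (norm_nonneg _).trans (hCq 0)
  refine ⟨Ca * Cb * (Cc * Cq * Cq), fun p => ?_⟩
  rw [phi1Coeff, div_eq_mul_inv, mul_inv, mul_inv]
  simp only [norm_mul]
  gcongr
  exacts [hCa _, hCb _, hCc _, hCq _, hCq _]

end phi1Coeff

section Phi1

variable {q a b c x y : ℂ}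

lemma summable_phi1_of_lt_one (hq : ‖q‖ < 1) (hc : ∀ r : ℕ, 1 - c * q ^ r ≠ 0) (hx : ‖x‖ < 1)
    (hy : ‖y‖ < 1) : Summable fun p : ℕ × ℕ => phi1Coeff q a b c p * x ^ p.1 * y ^ p.2 :=
  let ⟨_, hC⟩ := exists_forall_norm_phi1Coeff_le (a := a) (b := b) hq hc
  summable_mul_pow_mul_pow hC hx hy

lemma summable_phi1_of_root {m : ℕ} (ha : 1 - a * q ^ m = 0) :
    Summable fun p : ℕ × ℕ => phi1Coeff q a b c p * x ^ p.1 * y ^ p.2 := by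
  refine summable_of_ne_finset_zero (s := Finset.range (m + 1) ×ˢ Finset.range (m + 1)) ?_
  intro p hp
  simp only [Finset.mem_product, Finset.mem_range, not_and_or, not_lt] at hp
  rw [phi1Coeff, qPoch_eq_zero_of_lt ha (by omega)]
  simp

lemma not_summable_phi1 (hq : ‖q‖ < 1) (ha : ∀ r : ℕ, 1 - a * q ^ r ≠ 0)
    (hc : ∀ r : ℕ, 1 - c * q ^ r ≠ 0) (hy : 1 ≤ ‖y‖) :
    ¬ Summable fun p : ℕ × ℕ => phi1Coeff q a b c p * x ^ p.1 * y ^ p.2 := by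
  intro hs
  have hden : qPochInf q c * qPochInf q q ≠ 0 :=
    mul_ne_zero (qPochInf_ne_zero hq hc) (qPochInf_ne_zero hq (one_sub_self_mul_pow_ne_zero hq))
  have hlim : Tendsto (fun k => phi1Coeff q a b c (0, k)) atTop
      (𝓝 (qPochInf q a / (qPochInf q c * qPochInf q q))) := by
    simp only [phi1Coeff_zero_left]
    exact (tendsto_qPoch hq a).div ((tendsto_qPoch hq c).mul (tendsto_qPoch hq q)) hden
  refine not_tendsto_mul_pow_zero hlim (div_ne_zero (qPochInf_ne_zero hq ha) hden) hy ?_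
  simpa [Function.comp_def] using
    (hs.comp_injective (Prod.mk_right_injective 0)).tendsto_atTop_zero

lemma Phi1_sub_Phi1_mul_eq (hq : ‖q‖ < 1) (hc : ∀ r : ℕ, 1 - c * q ^ r ≠ 0)
    (hs : Summable fun p : ℕ × ℕ => phi1Coeff q a b c p * x ^ p.1 * y ^ p.2) :
    Phi1 q a b c x y - Phi1 q a b c (q * x) y =
      (1 - a) * (1 - b) / (1 - c) * x * Phi1 q (a * q) (b * q) (c * q) x y := by
  have hs' : Summable fun p : ℕ × ℕ => phi1Coeff q a b c p * (q * x) ^ p.1 * y ^ p.2 := by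
    refine Summable.of_norm_bounded hs.norm fun p => ?_
    have hqp : ‖q‖ ^ p.1 ≤ 1 := pow_le_one₀ (norm_nonneg q) hq.le
    simp only [mul_pow, norm_mul, norm_pow]
    calc _ = ‖q‖ ^ p.1 * (‖phi1Coeff q a b c p‖ * ‖x‖ ^ p.1 * ‖y‖ ^ p.2) := by ring
      _ ≤ _ := mul_le_of_le_one_left (by positivity) hqp
  set D : ℕ × ℕ → ℂ := fun p => (1 - q ^ p.1) * phi1Coeff q a b c p * x ^ p.1 * y ^ p.2
  have hdiff : Phi1 q a b c x y - Phi1 q a b c (q * x) y = ∑' p, D p := by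
    rw [Phi1_eq_tsum, Phi1_eq_tsum, ← hs.tsum_sub hs']
    congr 1
    funext p
    ring
  have hshift : ∑' p : ℕ × ℕ, D (p.1 + 1, p.2) = ∑' p, D p := by
    refine Function.Injective.tsum_eq (fun p p' h => ?_) fun p hp => ?_
    · simpa [Prod.ext_iff] using h
    · obtain ⟨_ | n, k⟩ := p
      · simp [D] at hp
      · exact ⟨(n, k), rfl⟩
  rw [hdiff, ← hshift, Phi1_eq_tsum, ← tsum_mul_left]
  congr 1
  funext p
  simp only [D, phi1Coeff_succ_left hq hc]
  ring

end Phi1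

theorem phi1_theta_x_general (q a b c : ℂ) (hq1 : ‖q‖ < 1)
    (hc : ∀ m : ℕ, c ≠ q ^ (-(m : ℤ))) (x y : ℂ) (hx : ‖x‖ < 1) :
    Phi1 q a b c x y - Phi1 q a b c (q * x) y =
      (1 - a) * (1 - b) / (1 - c) * x * Phi1 q (a * q) (b * q) (c * q) x y := by
  have hc' := one_sub_mul_pow_ne_zero_of_ne_zpow hc
  by_cases hy : ‖y‖ < 1
  · exact Phi1_sub_Phi1_mul_eq hq1 hc' (summable_phi1_of_lt_one hq1 hc' hx hy)
  by_cases ha : ∃ m, 1 - a * q ^ m = 0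
  · obtain ⟨m, hm⟩ := ha
    exact Phi1_sub_Phi1_mul_eq hq1 hc' (summable_phi1_of_root hm)
  push Not at ha hy
  rw [Phi1_eq_tsum, Phi1_eq_tsum, Phi1_eq_tsum,
    tsum_eq_zero_of_not_summable (not_summable_phi1 hq1 ha hc' hy),
    tsum_eq_zero_of_not_summable (not_summable_phi1 hq1 ha hc' hy),
    tsum_eq_zero_of_not_summable (not_summable_phi1 hq1 (one_sub_mul_mul_pow_ne_zero ha)
      (one_sub_mul_mul_pow_ne_zero hc') hy)]
  ring

/-- the relation `[Θ_{x,q}]_q Φ₁ = ([α]_q[β]_q/[γ]_q) x Φ₁(aq,bq;cq)` written out. -/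
theorem phi1_theta_x (q a b c : ℂ) (hq0 : 0 < ‖q‖) (hq1 : ‖q‖ < 1)
    (hc : ∀ m : ℕ, c ≠ q ^ (-(m : ℤ))) (hc1 : c ≠ 1) (x y : ℂ) (hx : ‖x‖ < 1) :
    Phi1 q a b c x y - Phi1 q a b c (q * x) y =
      (1 - a) * (1 - b) / (1 - c) * x * Phi1 q (a * q) (b * q) (c * q) x y :=
  phi1_theta_x_general q a b c hq1 hc x y hx
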